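/- arXiv:1711.01228 — 2 statements merged into one kernel-verified Lean document; each statement's English description precedes it below -/
import Mathlib

section
/- Let f(X) = Σ_{i<j} w_ij (‖x_i - x_j‖ - d_ij)² be the stress of a placement X ∈ R^{n×d}, with weights w_ij ≥ 0 and target distances d_ij > 0. Define g(X,Y) = tr(Xᵀ L^W X) - 2 tr(Xᵀ L^Y Y) + C, where C = Σ_{i<j} w_ij d_ij², L^W is the weighted Laplacian with off-diagonal entries -w_ij, and L^Y has off-diagonal entries -w_ij d_ij / ‖y_i - y_j‖ when y_i ≠ y_j and 0 otherwise (diagonals set so rows sum to zero). Then f(X) ≤ g(X,Y) for all X, Y, and f(X) = g(X,X). -/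
open Finset Matrix
open scoped Classical

/-- The stress function `f(X) = Σ_{i<j} w_ij (‖x_i - x_j‖ - d_ij)²`. -/
noncomputable def stress {n d : ℕ} (w dist : Fin n → Fin n → ℝ)
    (X : Fin n → EuclideanSpace ℝ (Fin d)) : ℝ :=
  ∑ i, ∑ j, if i < j then w i j * (‖X i - X j‖ - dist i j) ^ 2 else 0

/-- The weighted Laplacian `L^W`: off-diagonal entries `-w_ij`, zero row sums. -/
noncomputable def lapW {n : ℕ} (w : Fin n → Fin n → ℝ) :
    Matrix (Fin n) (Fin n) ℝ :=
  Matrix.of fun i j =>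
    if i = j then ∑ k ∈ univ.filter (· ≠ i), w i k else -(w i j)

/-- The Laplacian `L^Y`: off-diagonal entries `-w_ij d_ij / ‖y_i - y_j‖`
when `y_i ≠ y_j`, zero otherwise; zero row sums. -/
noncomputable def lapY {n d : ℕ} (w dist : Fin n → Fin n → ℝ)
    (Y : Fin n → EuclideanSpace ℝ (Fin d)) : Matrix (Fin n) (Fin n) ℝ :=
  Matrix.of fun i j =>
    if i = j then
      ∑ k ∈ univ.filter (· ≠ i),
        (if Y i = Y k then 0 else w i k * dist i k / ‖Y i - Y k‖)
    else
      (if Y i = Y j then 0 else -(w i j * dist i j / ‖Y i - Y j‖))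

/-- The matrix of a placement `X : Fin n → EuclideanSpace ℝ (Fin d)`. -/
def placementMatrix {n d : ℕ} (X : Fin n → EuclideanSpace ℝ (Fin d)) :
    Matrix (Fin n) (Fin d) ℝ :=
  Matrix.of fun i k => X i k

/-- The majorizing function `g(X,Y) = tr(Xᵀ L^W X) - 2 tr(Xᵀ L^Y Y) + C`. -/
noncomputable def majorant {n d : ℕ} (w dist : Fin n → Fin n → ℝ)
    (X Y : Fin n → EuclideanSpace ℝ (Fin d)) : ℝ :=
  Matrix.trace ((placementMatrix X)ᵀ * lapW w * placementMatrix X) -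
    2 * Matrix.trace ((placementMatrix X)ᵀ * lapY w dist Y * placementMatrix Y) +
    ∑ i, ∑ j, if i < j then w i j * dist i j ^ 2 else 0

/-!
Expanding the square, each pair contributes `w ‖u‖² - 2 w d ‖u‖ + w d²` to the stress, where
`u = x_i - x_j`. By Cauchy–Schwarz, `(w d / ‖v‖) ⟪u, v⟫ ≤ w d ‖u‖` for `v = y_i - y_j`, with
equality when `v = u`; so replacing the cross term pairwise gives an upper bound that is tight at
`Y = X`. The bound is the majorant because, for the Laplacian `L(s)` of a symmetric weight `s`,
`tr (Aᵀ L(s) B) = Σ_{i<j} s_ij ⟪a_i - a_j, b_i - b_j⟫`.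
-/

section Symmetrize

variable {ι M : Type*} [Fintype ι] [DecidableEq ι] [LinearOrder ι] [AddCommMonoid M]

theorem sum_sum_ite_ne_eq_sum_sum_ite_lt (F : ι → ι → M) :
    ∑ i, ∑ j, (if i = j then 0 else F i j) = ∑ i, ∑ j, if i < j then F i j + F j i else 0 := by
  have hsplit : ∀ i j, (if i = j then 0 else F i j) =
      (if i < j then F i j else 0) + (if j < i then F i j else 0) := by
    intro i j
    rcases lt_trichotomy i j with h | rfl | h
    · simp [h, h.ne, h.not_gt]
    · simp
    · simp [h, h.ne', h.not_gt]
  simp only [hsplit, sum_add_distrib]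
  rw [sum_comm (f := fun i j => if j < i then F i j else 0), ← sum_add_distrib]
  refine sum_congr rfl fun i _ => ?_
  rw [← sum_add_distrib]
  refine sum_congr rfl fun j _ => ?_
  split_ifs <;> simp

end Symmetrize

section WeightedLaplacian

variable {ι κ : Type*} [Fintype ι] [DecidableEq ι] [Fintype κ]

noncomputable def weightedLaplacian (s : ι → ι → ℝ) : Matrix ι ι ℝ :=
  Matrix.of fun i j => if i = j then ∑ k ∈ univ.filter (· ≠ i), s i k else -(s i j)

theorem sum_weightedLaplacian_mul (s D : ι → ι → ℝ) (i : ι) :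
    ∑ j, weightedLaplacian s i j * D i j = ∑ j, if i = j then 0 else s i j * (D i i - D i j) := by
  rw [← add_sum_erase _ _ (mem_univ i), ← add_sum_erase _ _ (mem_univ i)]
  simp only [weightedLaplacian, of_apply, if_true, filter_ne', zero_add, sum_mul]
  rw [← sum_add_distrib]
  refine sum_congr rfl fun j hj => ?_
  rw [if_neg (ne_of_mem_erase hj).symm, if_neg (ne_of_mem_erase hj).symm]
  ring

theorem trace_transpose_mul_weightedLaplacian_mul [LinearOrder ι] (s : ι → ι → ℝ)
    (hs : ∀ i j, s i j = s j i) (A B : Matrix ι κ ℝ) :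
    trace (Aᵀ * weightedLaplacian s * B) =
      ∑ i, ∑ j, if i < j then s i j * ∑ k, (A i k - A j k) * (B i k - B j k) else 0 := by
  set D : ι → ι → ℝ := fun i j => ∑ k, A i k * B j k with hD
  have htrace :
      trace (Aᵀ * weightedLaplacian s * B) = ∑ i, ∑ j, weightedLaplacian s i j * D i j := by
    rw [Matrix.mul_assoc, trace_mul_comm, Matrix.mul_assoc]
    simp only [trace, diag_apply, mul_apply, transpose_apply, hD, mul_comm (B _ _)]
  rw [htrace, sum_congr rfl fun i _ => sum_weightedLaplacian_mul s D i,
    sum_sum_ite_ne_eq_sum_sum_ite_lt]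
  refine sum_congr rfl fun i _ => sum_congr rfl fun j _ => ?_
  split_ifs
  · rw [hs j i, ← mul_add]
    simp only [hD, ← sum_sub_distrib, ← sum_add_distrib]
    exact congrArg _ (sum_congr rfl fun k _ => by ring)
  · rfl

end WeightedLaplacian

section PairMajorant

variable {E : Type*} [NormedAddCommGroup E] [InnerProductSpace ℝ E]

noncomputable def pairMajorant (w δ : ℝ) (u v : E) : ℝ :=
  w * ‖u‖ ^ 2 - 2 * (w * δ / ‖v‖ * inner ℝ u v) + w * δ ^ 2

theorem div_norm_mul_inner_le (c : ℝ) (hc : 0 ≤ c) (u v : E) :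
    c / ‖v‖ * inner ℝ u v ≤ c * ‖u‖ := by
  rcases eq_or_ne v 0 with rfl | hv
  · simpa using mul_nonneg hc (norm_nonneg u)
  calc c / ‖v‖ * inner ℝ u v ≤ c / ‖v‖ * (‖u‖ * ‖v‖) := by gcongr; exact real_inner_le_norm u v
    _ = c * ‖u‖ := by field_simp

theorem mul_sq_norm_sub_le_pairMajorant {w δ : ℝ} (hw : 0 ≤ w) (hδ : 0 ≤ δ) (u v : E) :
    w * (‖u‖ - δ) ^ 2 ≤ pairMajorant w δ u v := by
  have := div_norm_mul_inner_le (w * δ) (mul_nonneg hw hδ) u v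
  unfold pairMajorant
  nlinarith

theorem pairMajorant_self (w δ : ℝ) (u : E) : pairMajorant w δ u u = w * (‖u‖ - δ) ^ 2 := by
  rcases eq_or_ne u 0 with rfl | hu
  · simp [pairMajorant]
  rw [pairMajorant, real_inner_self_eq_norm_sq]
  field_simp
  ring

end PairMajorant

section Placement

variable {n d : ℕ}

theorem trace_placementMatrix_weightedLaplacian (s : Fin n → Fin n → ℝ)
    (hs : ∀ i j, s i j = s j i) (X Y : Fin n → EuclideanSpace ℝ (Fin d)) :
    trace ((placementMatrix X)ᵀ * weightedLaplacian s * placementMatrix Y) =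
      ∑ i, ∑ j, if i < j then s i j * inner ℝ (X i - X j) (Y i - Y j) else 0 := by
  rw [trace_transpose_mul_weightedLaplacian_mul s hs]
  simp [placementMatrix, PiLp.inner_apply, mul_comm]

theorem lapW_eq_weightedLaplacian (w : Fin n → Fin n → ℝ) : lapW w = weightedLaplacian w := rfl

-- The guard `Y i = Y j` in `lapY` is redundant: there `‖Y i - Y j‖ = 0`, and `x / 0 = 0`.
theorem lapY_eq_weightedLaplacian (w dist : Fin n → Fin n → ℝ)
    (Y : Fin n → EuclideanSpace ℝ (Fin d)) :
    lapY w dist Y = weightedLaplacian fun i j => w i j * dist i j / ‖Y i - Y j‖ := by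
  have hguard : ∀ i j, (if Y i = Y j then 0 else w i j * dist i j / ‖Y i - Y j‖) =
      w i j * dist i j / ‖Y i - Y j‖ := fun i j => by split_ifs with h <;> simp [h]
  ext i j
  by_cases h : Y i = Y j <;> simp [lapY, weightedLaplacian, hguard, h]

end Placement

theorem majorant_eq_sum_pairMajorant {n d : ℕ} (w dist : Fin n → Fin n → ℝ)
    (hw_symm : ∀ i j, w i j = w j i) (hd_symm : ∀ i j, dist i j = dist j i)
    (X Y : Fin n → EuclideanSpace ℝ (Fin d)) :
    majorant w dist X Y = ∑ i, ∑ j,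
      if i < j then pairMajorant (w i j) (dist i j) (X i - X j) (Y i - Y j) else 0 := by
  have hsymm : ∀ i j, w i j * dist i j / ‖Y i - Y j‖ = w j i * dist j i / ‖Y j - Y i‖ :=
    fun i j => by rw [hw_symm, hd_symm, norm_sub_rev]
  rw [majorant, lapW_eq_weightedLaplacian, lapY_eq_weightedLaplacian,
    trace_placementMatrix_weightedLaplacian _ hw_symm,
    trace_placementMatrix_weightedLaplacian _ hsymm]
  simp only [mul_sum, ← sum_sub_distrib, ← sum_add_distrib]
  refine sum_congr rfl fun i _ => sum_congr rfl fun j _ => ?_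
  split_ifs
  · rw [pairMajorant, real_inner_self_eq_norm_sq]
  · ring

/-- `g(·,Y)` dominates the stress `f`, with equality on the diagonal. -/
theorem stmt_1 {n d : ℕ} (w dist : Fin n → Fin n → ℝ)
    (hw_symm : ∀ i j, w i j = w j i) (hw_nonneg : ∀ i j, 0 ≤ w i j)
    (hd_symm : ∀ i j, dist i j = dist j i)
    (hd_pos : ∀ i j, i ≠ j → 0 < dist i j) :
    (∀ X Y : Fin n → EuclideanSpace ℝ (Fin d),
        stress w dist X ≤ majorant w dist X Y) ∧
    (∀ X : Fin n → EuclideanSpace ℝ (Fin d),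
        stress w dist X = majorant w dist X X) := by
  refine ⟨fun X Y => ?_, fun X => ?_⟩
  · rw [majorant_eq_sum_pairMajorant w dist hw_symm hd_symm, stress]
    refine sum_le_sum fun i _ => sum_le_sum fun j _ => ?_
    split_ifs with hij
    · exact mul_sq_norm_sub_le_pairMajorant (hw_nonneg i j) (hd_pos i j hij.ne).le _ _
    · rfl
  · simp only [majorant_eq_sum_pairMajorant w dist hw_symm hd_symm, stress, pairMajorant_self]
end

section
/- (Ostrowski's theorem) Suppose H: R^n → R^n has fixed point x*, H is Fréchet-differentiable at x*, and the spectral radius ρ(DH(x*)) < 1. Then x* is a point of attraction of the iteration x^{(k+1)} = H(x^{(k)}): there exists ε > 0 such that for every x^{(0)} with ‖x^{(0)} - x*‖ < ε, the iterated sequence converges to x*. -/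
/-!
By Gelfand's formula, applied to the complexified Jacobian in the Frobenius norm (which dominates
the operator norm and is unchanged by complexification), some power `J ^ m` has operator norm
`< 1`. By the chain rule `H^[m]` has derivative `J ^ m` at `x*`, hence contracts a ball of radius
`r` around `x*` by a factor `c < 1`. Continuity of `H^[j]` for `j < m` keeps the first `m`
iterates of nearby points in that ball, so `‖H^[k] x₀ - x*‖ ≤ c ^ (k / m) * r`.
-/

open Filter Topology

section Iteration

open Metric

variable {𝕜 E : Type*} [NontriviallyNormedField 𝕜] [NormedAddCommGroup E] [NormedSpace 𝕜 E]
  {G : E → E} {L : E →L[𝕜] E} {x : E}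

lemma HasFDerivAt.eventually_norm_sub_le_of_norm_lt (hG : HasFDerivAt G L x) (hx : G x = x)
    {c : ℝ} (hc : ‖L‖ < c) : ∀ᶠ y in 𝓝 x, ‖G y - x‖ ≤ c * ‖y - x‖ := by
  filter_upwards [hG.isLittleO.def (sub_pos.2 hc)] with y hy
  rw [hx] at hy
  calc ‖G y - x‖ = ‖L (y - x) + (G y - x - L (y - x))‖ := by rw [add_sub_cancel]
    _ ≤ ‖L‖ * ‖y - x‖ + (c - ‖L‖) * ‖y - x‖ := norm_add_le_of_le (L.le_opNorm _) hy
    _ = c * ‖y - x‖ := by ring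

lemma norm_iterate_sub_le_of_forall_mem_ball {r c : ℝ} (hc₀ : 0 ≤ c) (hc₁ : c ≤ 1)
    (hG : ∀ y ∈ ball x r, ‖G y - x‖ ≤ c * ‖y - x‖) {y : E} (hy : y ∈ ball x r) (k : ℕ) :
    ‖G^[k] y - x‖ ≤ c ^ k * ‖y - x‖ := by
  induction k with
  | zero => simp
  | succ k ih =>
    have hk : G^[k] y ∈ ball x r := by
      rw [mem_ball_iff_norm] at hy ⊢
      exact ih.trans_lt ((mul_le_of_le_one_left (norm_nonneg _) (pow_le_one₀ hc₀ hc₁)).trans_lt hy)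
    calc ‖G^[k + 1] y - x‖ ≤ c * ‖G^[k] y - x‖ := by
          rw [Function.iterate_succ_apply']; exact hG _ hk
      _ ≤ c * (c ^ k * ‖y - x‖) := by gcongr
      _ = c ^ (k + 1) * ‖y - x‖ := by ring

theorem HasFDerivAt.eventually_tendsto_iterate (hG : HasFDerivAt G L x) (hx : G x = x) {m : ℕ}
    (hm : 0 < m) (hLm : ‖L ^ m‖ < 1) : ∀ᶠ y in 𝓝 x, Tendsto (fun k => G^[k] y) atTop (𝓝 x) := by
  obtain ⟨c, hLc, hc₁⟩ := exists_between hLm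
  have hc₀ : 0 ≤ c := (norm_nonneg _).trans hLc.le
  obtain ⟨r, hr, hGm⟩ := eventually_nhds_iff_ball.1
    ((hG.iterate hx m).eventually_norm_sub_le_of_norm_lt (Function.iterate_fixed hx m) hLc)
  have hstart : ∀ᶠ y in 𝓝 x, ∀ j ∈ Set.Iio m, G^[j] y ∈ ball x r :=
    (eventually_all_finite (Set.finite_Iio m)).2 fun j _ =>
      (hG.continuousAt.iterate hx j).eventually_mem
        (by rw [Function.iterate_fixed hx j]; exact ball_mem_nhds x hr)
  filter_upwards [hstart] with y hy
  have hbound : ∀ k, ‖G^[k] y - x‖ ≤ c ^ (k / m) * r := fun k => by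
    have hk : G^[k % m] y ∈ ball x r := hy _ (Nat.mod_lt k hm)
    calc ‖G^[k] y - x‖ = ‖(G^[m])^[k / m] (G^[k % m] y) - x‖ := by
          rw [← Function.iterate_mul, ← Function.iterate_add_apply, Nat.div_add_mod]
      _ ≤ c ^ (k / m) * ‖G^[k % m] y - x‖ :=
          norm_iterate_sub_le_of_forall_mem_ball hc₀ hc₁.le hGm hk _
      _ ≤ c ^ (k / m) * r := by gcongr; exact (mem_ball_iff_norm.1 hk).le
  rw [tendsto_iff_norm_sub_tendsto_zero]
  refine squeeze_zero (fun _ => norm_nonneg _) hbound ?_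
  simpa using ((tendsto_pow_atTop_nhds_zero_of_lt_one hc₀ hc₁).comp
    (Nat.tendsto_div_const_atTop hm.ne')).mul_const r

end Iteration

lemma spectrum.eventually_norm_pow_lt_one {A : Type*} [NormedRing A] [NormedAlgebra ℂ A]
    [CompleteSpace A] {a : A} (ha : ∀ z ∈ spectrum ℂ a, ‖z‖ < 1) :
    ∀ᶠ m in atTop, ‖a ^ m‖ < 1 := by
  rcases subsingleton_or_nontrivial A with _ | _
  · exact .of_forall fun m => by simp [Subsingleton.elim (a ^ m) 0]
  have hρ : spectralRadius ℂ a < 1 := by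
    exact_mod_cast spectralRadius_lt_of_forall_lt a fun z hz => by exact_mod_cast ha z hz
  filter_upwards [(pow_nnnorm_pow_one_div_tendsto_nhds_spectralRadius a).eventually_lt_const hρ,
    eventually_gt_atTop 0] with m hm hm0
  have : (‖a ^ m‖₊ : ENNReal) < 1 := by
    contrapose! hm
    exact ENNReal.one_le_rpow hm (by positivity)
  exact_mod_cast this

section Frobenius

open Matrix

attribute [local instance] frobeniusNormedAddCommGroup frobeniusNormedRing frobeniusNormedAlgebra

lemma Matrix.norm_toEuclideanCLM_le_frobenius_norm {𝕜 n : Type*} [RCLike 𝕜] [Fintype n]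
    [DecidableEq n] (A : Matrix n n 𝕜) : ‖toEuclideanCLM (𝕜 := 𝕜) A‖ ≤ ‖A‖ := by
  refine ContinuousLinearMap.opNorm_le_bound _ (norm_nonneg A) fun x => ?_
  calc ‖toEuclideanCLM (𝕜 := 𝕜) A x‖ = ‖replicateCol Unit (A *ᵥ x.ofLp)‖ := by
        rw [frobenius_norm_replicateCol, ← ofLp_toEuclideanCLM, WithLp.toLp_ofLp]
    _ = ‖A * replicateCol Unit x.ofLp‖ := by rw [replicateCol_mulVec]
    _ ≤ ‖A‖ * ‖replicateCol Unit x.ofLp‖ := frobenius_norm_mul _ _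
    _ = ‖A‖ * ‖x‖ := by rw [frobenius_norm_replicateCol, WithLp.toLp_ofLp]

lemma Matrix.eventually_norm_toEuclideanCLM_pow_lt_one {n : Type*} [Fintype n] [DecidableEq n]
    {J : Matrix n n ℝ} (hJ : ∀ μ ∈ spectrum ℂ (J.map (algebraMap ℝ ℂ)), ‖μ‖ < 1) :
    ∀ᶠ m in atTop, ‖toEuclideanCLM (𝕜 := ℝ) J ^ m‖ < 1 := by
  filter_upwards [spectrum.eventually_norm_pow_lt_one hJ] with m hm
  calc ‖toEuclideanCLM (𝕜 := ℝ) J ^ m‖ = ‖toEuclideanCLM (𝕜 := ℝ) (J ^ m)‖ := by rw [map_pow]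
    _ ≤ ‖J ^ m‖ := norm_toEuclideanCLM_le_frobenius_norm _
    _ = ‖(J ^ m).map (algebraMap ℝ ℂ)‖ := (frobenius_norm_map_eq _ _ fun x => by simp).symm
    _ = ‖J.map (algebraMap ℝ ℂ) ^ m‖ := by
      rw [← RingHom.mapMatrix_apply, map_pow, RingHom.mapMatrix_apply]
    _ < 1 := hm

end Frobenius

/-- Ostrowski: if `H` is Fréchet-differentiable at a fixed
point `x*` with Jacobian `J` whose (complex) spectral radius is `< 1`, then
`x*` is a point of attraction of the iteration `x^{(k+1)} = H(x^{(k)})`. -/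
theorem stmt_10 {n : ℕ}
    (H : EuclideanSpace ℝ (Fin n) → EuclideanSpace ℝ (Fin n))
    (xstar : EuclideanSpace ℝ (Fin n))
    (hfix : H xstar = xstar)
    (J : Matrix (Fin n) (Fin n) ℝ)
    (hdiff : HasFDerivAt H
      (LinearMap.toContinuousLinearMap (Matrix.toEuclideanLin J)) xstar)
    (hspec : ∀ μ ∈ spectrum ℂ (J.map (algebraMap ℝ ℂ)), ‖μ‖ < 1) :
    ∃ ε > 0, ∀ x0 : EuclideanSpace ℝ (Fin n), ‖x0 - xstar‖ < ε →
      Tendsto (fun k => H^[k] x0) atTop (nhds xstar) := by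
  obtain ⟨m, hJm, hm⟩ :=
    ((Matrix.eventually_norm_toEuclideanCLM_pow_lt_one hspec).and (eventually_gt_atTop 0)).exists
  obtain ⟨ε, hε, hattract⟩ :=
    Metric.eventually_nhds_iff.1 (hdiff.eventually_tendsto_iterate hfix hm hJm)
  exact ⟨ε, hε, fun x0 hx0 => hattract (by rwa [dist_eq_norm])⟩
end
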